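/- Let e, f ∈ ℝ³ with ‖e‖ ≤ 1 and ‖f‖ ≤ 1, and define qubit effects E = ½(1 + e · σ) and F = ½(1 + f · σ) on ℂ². Then each of the four operators E ⊓ F, E ⊓ (1−F), (1−E) ⊓ F, and (1−E) ⊓ (1−F) has smallest eigenvalue ¼(2 − ‖e − f‖ − ‖e + f‖); in particular, all four operators are positive if and only if ‖e + f‖ + ‖e − f‖ ≤ 2. -/

import Mathlib

/-!
Since `(g · σ)² = ‖g‖² 1`, the absolute value of `E - F = ½ (e - f) · σ` is the scalar
`½ ‖e - f‖`, so `E ⊓ F = ¼ (2 - ‖e - f‖) 1 + ¼ (e + f) · σ`. A matrix `c 1 + g · σ` has trace `2c`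
and determinant `c² - ‖g‖²`, hence eigenvalues `c ± ‖g‖`. Passing from `E` to `1 - E` replaces `e`
by `-e`, which only swaps `‖e - f‖` and `‖e + f‖`.
-/

open Matrix ComplexOrder

/-- `e · σ = e₁σ_x + e₂σ_y + e₃σ_z` for `e ∈ ℝ³` and the Pauli matrices. -/
noncomputable def dotSigma (e : EuclideanSpace ℝ (Fin 3)) : Matrix (Fin 2) (Fin 2) ℂ :=
  (e 0 : ℂ) • !![0, 1; 1, 0] + (e 1 : ℂ) • !![0, -Complex.I; Complex.I, 0] +
    (e 2 : ℂ) • !![1, 0; 0, -1]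

/-- The absolute value of a (Hermitian) matrix: the positive semidefinite square root of
`Aᴴ * A` (which equals `A²` for Hermitian `A`). -/
noncomputable def matAbs (A : Matrix (Fin 2) (Fin 2) ℂ) : Matrix (Fin 2) (Fin 2) ℂ :=
  ((Matrix.posSemidef_conjTranspose_mul_self A).1.eigenvectorUnitary :
      Matrix (Fin 2) (Fin 2) ℂ) *
    diagonal (((↑) : ℝ → ℂ) ∘ (√·) ∘ (Matrix.posSemidef_conjTranspose_mul_self A).1.eigenvalues) *
    (star (Matrix.posSemidef_conjTranspose_mul_self A).1.eigenvectorUnitary :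
      Matrix (Fin 2) (Fin 2) ℂ)

/-- The generalized infimum E ⊓ F = ½(E + F - |E - F|). -/
noncomputable def matGinf (E F : Matrix (Fin 2) (Fin 2) ℂ) : Matrix (Fin 2) (Fin 2) ℂ :=
  (2 : ℂ)⁻¹ • (E + F - matAbs (E - F))

lemma min_eq_sub_of_add_eq_of_mul_eq {α : Type*} [Field α] [LinearOrder α] [IsStrictOrderedRing α]
    {a b c r : α} (hr : 0 ≤ r) (hsum : a + b = 2 * c) (hprod : a * b = c ^ 2 - r ^ 2) :
    min a b = c - r := by
  have hroots : (a - (c - r)) * (a - (c + r)) = 0 := by linear_combination a * hsum - hprod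
  rcases mul_eq_zero.mp hroots with ha | ha
  · exact (min_eq_left_iff.mpr (by linarith)).trans (by linarith)
  · exact (min_eq_right_iff.mpr (by linarith)).trans (by linarith)

lemma ciInf_fin_two {α : Type*} [ConditionallyCompleteLinearOrder α] (f : Fin 2 → α) :
    ⨅ i, f i = min (f 0) (f 1) := by
  refine le_antisymm (le_min (ciInf_le (Set.finite_range f).bddBelow 0)
    (ciInf_le (Set.finite_range f).bddBelow 1)) (le_ciInf fun i => ?_)
  fin_cases i
  exacts [min_le_left _ _, min_le_right _ _]

namespace Matrix.IsHermitian

variable {n 𝕜 : Type*} [Fintype n] [DecidableEq n] [RCLike 𝕜] {A : Matrix n n 𝕜}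

lemma eigenvalues_eq_of_eq_smul_one (hA : A.IsHermitian) {s : ℝ} (h : A = s • 1) (i : n) :
    hA.eigenvalues i = s := by
  have : Nonempty n := ⟨i⟩
  have hspec : spectrum ℝ A = {s} := by
    rw [h, ← Algebra.algebraMap_eq_smul_one, spectrum.scalar_eq]
  have hi : hA.eigenvalues i ∈ spectrum ℝ A :=
    hA.spectrum_real_eq_range_eigenvalues ▸ Set.mem_range_self i
  rwa [hspec, Set.mem_singleton_iff] at hi

lemma posSemidef_iff_nonneg_iInf_eigenvalues [Nonempty n] (hA : A.IsHermitian) :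
    A.PosSemidef ↔ 0 ≤ ⨅ i, hA.eigenvalues i := by
  rw [hA.posSemidef_iff_eigenvalues_nonneg, le_ciInf_iff (Set.finite_range _).bddBelow]
  rfl

lemma iInf_eigenvalues_fin_two {B : Matrix (Fin 2) (Fin 2) 𝕜} (hB : B.IsHermitian) {c r : ℝ}
    (hr : 0 ≤ r) (htrace : B.trace = (2 * c : ℝ)) (hdet : B.det = (c ^ 2 - r ^ 2 : ℝ)) :
    ⨅ i, hB.eigenvalues i = c - r := by
  rw [hB.trace_eq_sum_eigenvalues, Fin.sum_univ_two] at htrace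
  rw [hB.det_eq_prod_eigenvalues, Fin.prod_univ_two] at hdet
  rw [ciInf_fin_two]
  exact min_eq_sub_of_add_eq_of_mul_eq hr (by exact_mod_cast htrace) (by exact_mod_cast hdet)

end Matrix.IsHermitian

lemma EuclideanSpace.norm_sq_fin_three (g : EuclideanSpace ℝ (Fin 3)) :
    ‖g‖ ^ 2 = g 0 ^ 2 + g 1 ^ 2 + g 2 ^ 2 := by
  simp [EuclideanSpace.norm_sq_eq, Fin.sum_univ_three]

lemma dotSigma_eq_of (g : EuclideanSpace ℝ (Fin 3)) :
    dotSigma g = !![(g 2 : ℂ), g 0 - g 1 * Complex.I; g 0 + g 1 * Complex.I, -(g 2 : ℂ)] := by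
  ext i j
  fin_cases i <;> fin_cases j <;> simp [dotSigma, sub_eq_add_neg]

lemma isHermitian_dotSigma (g : EuclideanSpace ℝ (Fin 3)) : (dotSigma g).IsHermitian := by
  rw [dotSigma_eq_of]
  ext i j
  fin_cases i <;> fin_cases j <;> simp [conjTranspose_apply, Complex.ext_iff]

lemma dotSigma_add (g h : EuclideanSpace ℝ (Fin 3)) :
    dotSigma (g + h) = dotSigma g + dotSigma h := by
  simp only [dotSigma, PiLp.add_apply, Complex.ofReal_add]
  module

lemma dotSigma_smul (a : ℝ) (g : EuclideanSpace ℝ (Fin 3)) :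
    dotSigma (a • g) = a • dotSigma g := by
  simp only [dotSigma, PiLp.smul_apply, smul_eq_mul, Complex.ofReal_mul]
  module

lemma dotSigma_neg (g : EuclideanSpace ℝ (Fin 3)) : dotSigma (-g) = -dotSigma g := by
  simpa using dotSigma_smul (-1) g

lemma dotSigma_sub (g h : EuclideanSpace ℝ (Fin 3)) :
    dotSigma (g - h) = dotSigma g - dotSigma h := by
  rw [sub_eq_add_neg, dotSigma_add, dotSigma_neg, sub_eq_add_neg]

lemma dotSigma_mul_self (g : EuclideanSpace ℝ (Fin 3)) :
    dotSigma g * dotSigma g = (‖g‖ ^ 2) • (1 : Matrix (Fin 2) (Fin 2) ℂ) := by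
  rw [dotSigma_eq_of, mul_fin_two, EuclideanSpace.norm_sq_fin_three]
  ext i j
  fin_cases i <;> fin_cases j <;> simp [Complex.ext_iff, one_apply, sq] <;> grind

lemma trace_dotSigma (g : EuclideanSpace ℝ (Fin 3)) : (dotSigma g).trace = 0 := by
  simp [dotSigma_eq_of, trace_fin_two]

lemma det_smul_one_add_dotSigma (c : ℝ) (g : EuclideanSpace ℝ (Fin 3)) :
    (c • 1 + dotSigma g).det = (c ^ 2 - ‖g‖ ^ 2 : ℝ) := by
  rw [dotSigma_eq_of, EuclideanSpace.norm_sq_fin_three, det_fin_two]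
  simp [Complex.ext_iff, one_apply, sq]
  grind

lemma isHermitian_smul_one_add_dotSigma (c : ℝ) (g : EuclideanSpace ℝ (Fin 3)) :
    (c • 1 + dotSigma g).IsHermitian :=
  (isHermitian_one.smul (IsSelfAdjoint.all c)).add (isHermitian_dotSigma g)

lemma iInf_eigenvalues_smul_one_add_dotSigma (c : ℝ) (g : EuclideanSpace ℝ (Fin 3)) :
    ⨅ i, (isHermitian_smul_one_add_dotSigma c g).eigenvalues i = c - ‖g‖ := by
  refine IsHermitian.iInf_eigenvalues_fin_two _ (norm_nonneg g) ?_ (det_smul_one_add_dotSigma c g)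
  simp [trace_dotSigma, mul_comm]

lemma matAbs_eq_smul_one {A : Matrix (Fin 2) (Fin 2) ℂ} {t : ℝ} (ht : 0 ≤ t)
    (hA : Aᴴ * A = (t ^ 2) • 1) : matAbs A = t • 1 := by
  set hP := (posSemidef_conjTranspose_mul_self A).1
  have hsqrt (i : Fin 2) : √(hP.eigenvalues i) = t := by
    rw [hP.eigenvalues_eq_of_eq_smul_one hA i, Real.sqrt_sq ht]
  have hU := Unitary.mul_star_self_of_mem hP.eigenvectorUnitary.2
  simp only [matAbs, Function.comp_def, hsqrt]
  rw [← smul_one_eq_diagonal]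
  simp [hU]

lemma matAbs_dotSigma (g : EuclideanSpace ℝ (Fin 3)) : matAbs (dotSigma g) = ‖g‖ • 1 := by
  refine matAbs_eq_smul_one (norm_nonneg g) ?_
  rw [(isHermitian_dotSigma g).eq, dotSigma_mul_self]

noncomputable def qubitEffect (e : EuclideanSpace ℝ (Fin 3)) : Matrix (Fin 2) (Fin 2) ℂ :=
  (2 : ℂ)⁻¹ • (1 + dotSigma e)

lemma one_sub_qubitEffect (e : EuclideanSpace ℝ (Fin 3)) :
    1 - qubitEffect e = qubitEffect (-e) := by
  rw [qubitEffect, qubitEffect, dotSigma_neg]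
  module

lemma matGinf_qubitEffect (e f : EuclideanSpace ℝ (Fin 3)) :
    matGinf (qubitEffect e) (qubitEffect f) =
      ((2 - ‖e - f‖) / 4) • 1 + dotSigma ((4 : ℝ)⁻¹ • (e + f)) := by
  have hsub : qubitEffect e - qubitEffect f = dotSigma ((2 : ℝ)⁻¹ • (e - f)) := by
    rw [qubitEffect, qubitEffect, dotSigma_smul, dotSigma_sub]
    module
  rw [matGinf, hsub, matAbs_dotSigma, dotSigma_smul, dotSigma_add, norm_smul, qubitEffect,
    qubitEffect]
  simp only [smul_add, norm_inv, Real.norm_ofNat]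
  module

lemma iInf_eigenvalues_matGinf_qubitEffect (e f : EuclideanSpace ℝ (Fin 3)) :
    ∃ h : (matGinf (qubitEffect e) (qubitEffect f)).IsHermitian,
      ⨅ i, h.eigenvalues i = (2 - (‖e - f‖ + ‖e + f‖)) / 4 := by
  rw [matGinf_qubitEffect]
  refine ⟨_, (iInf_eigenvalues_smul_one_add_dotSigma _ _).trans ?_⟩
  rw [norm_smul, Real.norm_of_nonneg (by norm_num)]
  ring

lemma posSemidef_matGinf_qubitEffect_iff (e f : EuclideanSpace ℝ (Fin 3)) :
    (matGinf (qubitEffect e) (qubitEffect f)).PosSemidef ↔ ‖e - f‖ + ‖e + f‖ ≤ 2 := by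
  obtain ⟨h, hinf⟩ := iInf_eigenvalues_matGinf_qubitEffect e f
  rw [h.posSemidef_iff_nonneg_iInf_eigenvalues, hinf]
  constructor <;> intro <;> linarith

section

variable {E : Type*} [SeminormedAddCommGroup E]

lemma norm_sub_add_norm_add_neg_right (e f : E) :
    ‖e - -f‖ + ‖e + -f‖ = ‖e - f‖ + ‖e + f‖ := by
  rw [sub_neg_eq_add, ← sub_eq_add_neg, add_comm]

lemma norm_sub_add_norm_add_neg_left (e f : E) :
    ‖-e - f‖ + ‖-e + f‖ = ‖e - f‖ + ‖e + f‖ := by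
  rw [← neg_add', norm_neg, norm_neg_add, add_comm]

end

theorem qubit_ginf_smallest_eigenvalue_general (e f : EuclideanSpace ℝ (Fin 3)) :
    (∃ h : (matGinf ((2 : ℂ)⁻¹ • (1 + dotSigma e)) ((2 : ℂ)⁻¹ • (1 + dotSigma f))).IsHermitian,
      ⨅ i, h.eigenvalues i = (2 - ‖e - f‖ - ‖e + f‖) / 4) ∧
    (∃ h : (matGinf ((2 : ℂ)⁻¹ • (1 + dotSigma e))
        (1 - (2 : ℂ)⁻¹ • (1 + dotSigma f))).IsHermitian,
      ⨅ i, h.eigenvalues i = (2 - ‖e - f‖ - ‖e + f‖) / 4) ∧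
    (∃ h : (matGinf (1 - (2 : ℂ)⁻¹ • (1 + dotSigma e))
        ((2 : ℂ)⁻¹ • (1 + dotSigma f))).IsHermitian,
      ⨅ i, h.eigenvalues i = (2 - ‖e - f‖ - ‖e + f‖) / 4) ∧
    (∃ h : (matGinf (1 - (2 : ℂ)⁻¹ • (1 + dotSigma e))
        (1 - (2 : ℂ)⁻¹ • (1 + dotSigma f))).IsHermitian,
      ⨅ i, h.eigenvalues i = (2 - ‖e - f‖ - ‖e + f‖) / 4) ∧
    (((matGinf ((2 : ℂ)⁻¹ • (1 + dotSigma e)) ((2 : ℂ)⁻¹ • (1 + dotSigma f))).PosSemidef ∧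
      (matGinf ((2 : ℂ)⁻¹ • (1 + dotSigma e)) (1 - (2 : ℂ)⁻¹ • (1 + dotSigma f))).PosSemidef ∧
      (matGinf (1 - (2 : ℂ)⁻¹ • (1 + dotSigma e)) ((2 : ℂ)⁻¹ • (1 + dotSigma f))).PosSemidef ∧
      (matGinf (1 - (2 : ℂ)⁻¹ • (1 + dotSigma e))
        (1 - (2 : ℂ)⁻¹ • (1 + dotSigma f))).PosSemidef) ↔
      ‖e + f‖ + ‖e - f‖ ≤ 2) := by
  simp only [← qubitEffect.eq_1, one_sub_qubitEffect, sub_sub]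
  have hinf := iInf_eigenvalues_matGinf_qubitEffect
  refine ⟨hinf e f, ?_, ?_, ?_, ?_⟩
  · simpa only [norm_sub_add_norm_add_neg_right] using hinf e (-f)
  · simpa only [norm_sub_add_norm_add_neg_left] using hinf (-e) f
  · simpa only [norm_sub_add_norm_add_neg_left, norm_sub_add_norm_add_neg_right] using
      hinf (-e) (-f)
  · simp only [posSemidef_matGinf_qubitEffect_iff, norm_sub_add_norm_add_neg_left,
      norm_sub_add_norm_add_neg_right, and_self, add_comm ‖e + f‖]

/-- For qubit effects E = ½(1 + e·σ) and F = ½(1 + f·σ), each of the four generalized infima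
E ⊓ F, E ⊓ (1-F), (1-E) ⊓ F, (1-E) ⊓ (1-F) is Hermitian with smallest eigenvalue
¼(2 - ‖e - f‖ - ‖e + f‖); in particular all four are positive iff ‖e + f‖ + ‖e - f‖ ≤ 2. -/
theorem qubit_ginf_smallest_eigenvalue (e f : EuclideanSpace ℝ (Fin 3))
    (he : ‖e‖ ≤ 1) (hf : ‖f‖ ≤ 1) :
    (∃ h : (matGinf ((2 : ℂ)⁻¹ • (1 + dotSigma e)) ((2 : ℂ)⁻¹ • (1 + dotSigma f))).IsHermitian,
      ⨅ i, h.eigenvalues i = (2 - ‖e - f‖ - ‖e + f‖) / 4) ∧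
    (∃ h : (matGinf ((2 : ℂ)⁻¹ • (1 + dotSigma e))
        (1 - (2 : ℂ)⁻¹ • (1 + dotSigma f))).IsHermitian,
      ⨅ i, h.eigenvalues i = (2 - ‖e - f‖ - ‖e + f‖) / 4) ∧
    (∃ h : (matGinf (1 - (2 : ℂ)⁻¹ • (1 + dotSigma e))
        ((2 : ℂ)⁻¹ • (1 + dotSigma f))).IsHermitian,
      ⨅ i, h.eigenvalues i = (2 - ‖e - f‖ - ‖e + f‖) / 4) ∧
    (∃ h : (matGinf (1 - (2 : ℂ)⁻¹ • (1 + dotSigma e))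
        (1 - (2 : ℂ)⁻¹ • (1 + dotSigma f))).IsHermitian,
      ⨅ i, h.eigenvalues i = (2 - ‖e - f‖ - ‖e + f‖) / 4) ∧
    (((matGinf ((2 : ℂ)⁻¹ • (1 + dotSigma e)) ((2 : ℂ)⁻¹ • (1 + dotSigma f))).PosSemidef ∧
      (matGinf ((2 : ℂ)⁻¹ • (1 + dotSigma e)) (1 - (2 : ℂ)⁻¹ • (1 + dotSigma f))).PosSemidef ∧
      (matGinf (1 - (2 : ℂ)⁻¹ • (1 + dotSigma e)) ((2 : ℂ)⁻¹ • (1 + dotSigma f))).PosSemidef ∧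
      (matGinf (1 - (2 : ℂ)⁻¹ • (1 + dotSigma e))
        (1 - (2 : ℂ)⁻¹ • (1 + dotSigma f))).PosSemidef) ↔
      ‖e + f‖ + ‖e - f‖ ≤ 2) :=
  qubit_ginf_smallest_eigenvalue_general e f
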